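/- Let T be a finite tree with a designated root, with edge parameters r_e, x_e ∈ ℝ satisfying r_e^2 + x_e^2 > 0 for every edge e, and define g_e = r_e/(r_e^2 + x_e^2) and β_e = x_e/(r_e^2 + x_e^2). Let K_r and K_x be the path-sum matrices with weights r_e and x_e, and let H_g and H_β be the reduced weighted graph Laplacians with weights g_e and β_e respectively (H_g(a,a) = Σ_{c : {a,c} edge} g_{ac}, H_g(a,b) = -g_{ab} for edges {a,b}, zero otherwise, indexed by non-root vertices; similarly for H_β). Suppose vectors p, q, ε, θ indexed by the non-root vertices satisfy the LC-PF matrix equations p = H_g ε + H_β θ and q = H_β ε - H_g θ. Then ε = K_r p + K_x q and θ = K_x p - K_r q. -/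

import Mathlib

/-!
Index the edges of the tree by their lower endpoints: the non-root vertex `c` stands for the
edge from `c` to its parent. With the ancestor matrix `A` (`A c a = 1` iff `c` lies on the path
from `a` to the root) and the signed incidence matrix `B` (`B c a = [a = c] - [a = parent c]`),
one has `K_w = Aᵀ diag(w) A` and `H_u = Bᵀ diag(u) B`, and `B Aᵀ = 1` because the ancestors of
`c` are `c` together with the ancestors of its parent. Hence `K_w H_u = Aᵀ diag(w u) B` depends
only on the edgewise products `w_e u_e`. Since `r g + x β = 1` and `r β = x g` on every edge,
`K_r H_g + K_x H_β = Aᵀ B = 1` and `K_r H_β = K_x H_g`, and substituting the LC-PF equations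
gives the inversion formulas.
-/

open Classical Matrix

/-- A finite tree with a designated root vertex (the slack bus). -/
structure GridTree (V : Type*) [Fintype V] [DecidableEq V] where
  graph : SimpleGraph V
  root : V
  isTree : graph.IsTree

namespace GridTree

variable {V : Type*} [Fintype V] [DecidableEq V] (T : GridTree V)

/-- The unique path (as a walk) from a vertex to the root. -/
noncomputable def pathToRoot (a : V) : T.graph.Walk a T.root :=
  (T.isTree.existsUnique_path a T.root).choose

/-- `E_a`: the set of edges on the unique path from `a` to the root. -/
noncomputable def pathEdges (a : V) : Finset (Sym2 V) :=
  (T.pathToRoot a).edges.toFinset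

/-- `c` is a descendant of `a`: `a` lies on the unique path from `c` to the root
(in particular every vertex is a descendant of itself). -/
def Descendant (c a : V) : Prop := a ∈ (T.pathToRoot c).support

/-- `b` is the parent of `a`: the edge `{a, b}` lies on the path from `a` to the root
(equivalently, `b` is the unique neighbor of `a` on that path). -/
noncomputable def IsParent (a b : V) : Prop := s(a, b) ∈ T.pathEdges a

/-- The path-sum matrix `K_w`, indexed by the non-root vertices:
`K_w(a,b) = ∑_{e ∈ E_a ∩ E_b} w_e`. -/
noncomputable def pathMatrix (w : Sym2 V → ℝ) :
    Matrix {v : V // v ≠ T.root} {v : V // v ≠ T.root} ℝ :=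
  fun a b => ∑ e ∈ T.pathEdges a.1 ∩ T.pathEdges b.1, w e

/-- The reduced weighted graph Laplacian with edge weights `w`, indexed by the
non-root vertices (the row and column of the root are deleted). -/
noncomputable def lap (w : Sym2 V → ℝ) :
    Matrix {v : V // v ≠ T.root} {v : V // v ≠ T.root} ℝ :=
  fun a b =>
    if a = b then ∑ c ∈ Finset.univ.filter (fun c => T.graph.Adj a.1 c), w s(a.1, c)
    else if T.graph.Adj a.1 b.1 then - w s(a.1, b.1) else 0

end GridTree

lemma Matrix.transpose_mul_diagonal_mul_apply {n R : Type*} [Fintype n] [DecidableEq n]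
    [CommSemiring R] (B : Matrix n n R) (u : n → R) (a b : n) :
    (Bᵀ * diagonal u * B) a b = ∑ c, u c * (B c a * B c b) := by
  rw [Matrix.mul_apply]
  simp only [Matrix.mul_diagonal, transpose_apply]
  exact Finset.sum_congr rfl fun c _ => by ring

namespace GridTree

open SimpleGraph

variable {V : Type*} [Fintype V] [DecidableEq V] (T : GridTree V)

abbrev NonRoot : Type _ := {v : V // v ≠ T.root}

lemma isPath_pathToRoot (a : V) : (T.pathToRoot a).IsPath :=
  (T.isTree.existsUnique_path a T.root).choose_spec.1

lemma eq_pathToRoot {a : V} {p : T.graph.Walk a T.root} (hp : p.IsPath) : p = T.pathToRoot a :=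
  (T.isTree.existsUnique_path a T.root).choose_spec.2 p hp

lemma pathToRoot_root : T.pathToRoot T.root = Walk.nil :=
  (T.eq_pathToRoot Walk.IsPath.nil).symm

/-- At the root this is the root itself. -/
noncomputable def parent (a : V) : V := (T.pathToRoot a).snd

lemma parent_root : T.parent T.root = T.root := by
  simp [parent, T.pathToRoot_root]

noncomputable def parentEdge (a : V) : Sym2 V := s(a, T.parent a)

noncomputable def depth (a : V) : ℕ := (T.pathToRoot a).length

lemma adj_parent {a : V} (ha : a ≠ T.root) : T.graph.Adj a (T.parent a) :=
  (T.pathToRoot a).adj_snd (Walk.not_nil_of_ne ha)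

lemma parent_ne {a : V} (ha : a ≠ T.root) : T.parent a ≠ a :=
  (T.adj_parent ha).ne'

lemma parentEdge_mem_edgeSet {a : V} (ha : a ≠ T.root) : T.parentEdge a ∈ T.graph.edgeSet :=
  T.adj_parent ha

lemma pathToRoot_eq_cons {a : V} (ha : a ≠ T.root) :
    T.pathToRoot a = Walk.cons (T.adj_parent ha) (T.pathToRoot (T.parent a)) := by
  conv_lhs => rw [← (T.pathToRoot a).cons_tail_eq (Walk.not_nil_of_ne ha)]
  rw [T.eq_pathToRoot (T.isPath_pathToRoot a).tail]
  rfl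

lemma depth_eq_depth_parent_add_one {a : V} (ha : a ≠ T.root) :
    T.depth a = T.depth (T.parent a) + 1 := by
  rw [depth, depth, T.pathToRoot_eq_cons ha, Walk.length_cons]

theorem parent_induction {P : V → Prop} (root : P T.root)
    (step : ∀ a, a ≠ T.root → P (T.parent a) → P a) (a : V) : P a :=
  if ha : a = T.root then ha ▸ root
  else step a ha (parent_induction root step (T.parent a))
termination_by T.depth a
decreasing_by rw [T.depth_eq_depth_parent_add_one ha]; omega

lemma descendant_root_iff {c : V} : T.Descendant T.root c ↔ c = T.root := by
  simp [Descendant, T.pathToRoot_root]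

lemma descendant_iff {a c : V} (ha : a ≠ T.root) :
    T.Descendant a c ↔ c = a ∨ T.Descendant (T.parent a) c := by
  rw [Descendant, T.pathToRoot_eq_cons ha, Walk.support_cons, List.mem_cons]
  rfl

lemma not_descendant_parent {a : V} (ha : a ≠ T.root) : ¬ T.Descendant (T.parent a) a := by
  have := T.isPath_pathToRoot a
  rw [T.pathToRoot_eq_cons ha, Walk.cons_isPath_iff] at this
  exact this.2

section

variable {T}

lemma Descendant.depth_le {a c : V} (h : T.Descendant a c) : T.depth c ≤ T.depth a := by
  induction a using T.parent_induction with
  | root => rw [T.descendant_root_iff.1 h]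
  | step a ha ih =>
    rcases (T.descendant_iff ha).1 h with rfl | h
    · rfl
    · have := T.depth_eq_depth_parent_add_one ha
      have := ih h
      omega

lemma Descendant.antisymm {a c : V} (hac : T.Descendant a c) (hca : T.Descendant c a) : a = c := by
  by_contra hne
  have ha : a ≠ T.root := by
    rintro rfl
    exact hne (T.descendant_root_iff.1 hac).symm
  rcases (T.descendant_iff ha).1 hac with rfl | h
  · exact hne rfl
  · have := h.depth_le
    have := hca.depth_le
    have := T.depth_eq_depth_parent_add_one ha
    omega

end

lemma parent_parent_ne {a : V} (ha : a ≠ T.root) : T.parent (T.parent a) ≠ a := by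
  intro h
  have hpa : T.parent a ≠ T.root := by
    intro hr
    rw [hr, T.parent_root] at h
    exact ha h.symm
  have := T.depth_eq_depth_parent_add_one ha
  have := T.depth_eq_depth_parent_add_one hpa
  rw [h] at this
  omega

lemma parent_eq_of_adj {b d : V} (h : T.graph.Adj b d) (hd : ¬ T.Descendant d b) :
    b ≠ T.root ∧ T.parent b = d := by
  have hpath := (T.isPath_pathToRoot d).cons (h := h) hd
  refine ⟨fun hb => hd (hb ▸ (T.pathToRoot d).end_mem_support), ?_⟩
  rw [parent, ← T.eq_pathToRoot hpath]
  simp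

lemma adj_iff {b d : V} :
    T.graph.Adj b d ↔
      (b ≠ T.root ∧ T.parent b = d) ∨ (d ≠ T.root ∧ T.parent d = b) := by
  constructor
  · intro h
    by_cases hd : T.Descendant d b
    · by_cases hb : T.Descendant b d
      · exact absurd (hb.antisymm hd) h.ne
      · exact Or.inr (T.parent_eq_of_adj h.symm hb)
    · exact Or.inl (T.parent_eq_of_adj h hd)
  · rintro (⟨hb, rfl⟩ | ⟨hd, rfl⟩)
    · exact T.adj_parent hb
    · exact (T.adj_parent hd).symm

lemma pathEdges_root : T.pathEdges T.root = ∅ := by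
  simp [pathEdges, T.pathToRoot_root]

lemma pathEdges_eq_insert {a : V} (ha : a ≠ T.root) :
    T.pathEdges a = insert (T.parentEdge a) (T.pathEdges (T.parent a)) := by
  rw [pathEdges, T.pathToRoot_eq_cons ha, Walk.edges_cons, List.toFinset_cons]
  rfl

lemma pathEdges_eq_image (a : V) :
    T.pathEdges a =
      (Finset.univ.filter fun c : T.NonRoot => T.Descendant a c).image
        fun c : T.NonRoot => T.parentEdge c := by
  induction a using T.parent_induction with
  | root =>
    simp [T.pathEdges_root, T.descendant_root_iff]
  | step a ha ih =>
    refine Finset.ext fun e => ?_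
    simp only [T.pathEdges_eq_insert ha, ih, Finset.mem_insert, Finset.mem_image,
      Finset.mem_filter, Finset.mem_univ, true_and, T.descendant_iff ha]
    constructor
    · rintro (rfl | ⟨c, hc, rfl⟩)
      · exact ⟨⟨a, ha⟩, Or.inl rfl, rfl⟩
      · exact ⟨c, Or.inr hc, rfl⟩
    · rintro ⟨c, rfl | hc, rfl⟩
      · exact Or.inl rfl
      · exact Or.inr ⟨c, hc, rfl⟩

lemma parentEdge_injective : Function.Injective (fun c : T.NonRoot => T.parentEdge c) := by
  rintro ⟨c, hc⟩ ⟨d, hd⟩ h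
  simp only [parentEdge, Sym2.eq, Sym2.rel_iff', Prod.mk.injEq, Prod.swap_prod_mk] at h
  rcases h with ⟨h, -⟩ | ⟨rfl, h⟩
  · exact Subtype.ext h
  · exact absurd h (T.parent_parent_ne hd)

lemma sum_nonRoot_eq_sum {M : Type*} [AddCommMonoid M] {f : V → M} (hf : f T.root = 0) :
    ∑ c : T.NonRoot, f c = ∑ v, f v := by
  rw [Fintype.sum_eq_add_sum_subtype_ne f T.root, hf, zero_add]

lemma sum_adj_eq_parent_add_children {M : Type*} [AddCommMonoid M] {a : V} (ha : a ≠ T.root)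
    (f : V → M) :
    ∑ d ∈ Finset.univ.filter (T.graph.Adj a), f d =
      f (T.parent a) + ∑ c : T.NonRoot, if T.parent c = a then f c else 0 := by
  have hsplit : ∀ v, (if T.graph.Adj a v then f v else 0) =
      (if v = T.parent a then f v else 0) +
        (if v ≠ T.root ∧ T.parent v = a then f v else 0) := by
    intro v
    by_cases h1 : v = T.parent a
    · subst h1
      simp [T.adj_parent ha, T.parent_parent_ne ha]
    · simp [T.adj_iff, ha, h1, eq_comm]
  rw [Finset.sum_filter, Finset.sum_congr rfl fun v _ => hsplit v, Finset.sum_add_distrib,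
    Finset.sum_ite_eq', if_pos (Finset.mem_univ _), ← T.sum_nonRoot_eq_sum (by simp)]
  congr 1
  exact Finset.sum_congr rfl fun c _ => by simp only [ne_eq, c.2, not_false_eq_true, true_and]

noncomputable def ancestorMatrix : Matrix T.NonRoot T.NonRoot ℝ :=
  fun c a => if T.Descendant a c then 1 else 0

noncomputable def incidenceMatrix : Matrix T.NonRoot T.NonRoot ℝ :=
  fun c a => (if a = c then 1 else 0) - (if a.1 = T.parent c then 1 else 0)

lemma pathMatrix_eq_ancestorMatrix_mul (w : Sym2 V → ℝ) :
    T.pathMatrix w =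
      T.ancestorMatrixᵀ * diagonal (fun c : T.NonRoot => w (T.parentEdge c)) *
        T.ancestorMatrix := by
  ext a b
  rw [pathMatrix, T.pathEdges_eq_image, T.pathEdges_eq_image,
    ← Finset.image_inter _ _ T.parentEdge_injective,
    Finset.sum_image fun c _ d _ h => T.parentEdge_injective h, ← Finset.filter_and,
    Finset.sum_filter, Matrix.mul_apply]
  simp only [Matrix.mul_diagonal, transpose_apply, ancestorMatrix]
  exact Finset.sum_congr rfl fun c _ => by split_ifs <;> simp_all

lemma incidenceMatrix_mul_ancestorMatrix_transpose :
    T.incidenceMatrix * T.ancestorMatrixᵀ = 1 := by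
  ext c d
  have hrow : (T.incidenceMatrix * T.ancestorMatrixᵀ) c d =
      (if T.Descendant c d then 1 else 0) - if T.Descendant (T.parent c) d then 1 else 0 := by
    rw [Matrix.mul_apply]
    simp only [incidenceMatrix, ancestorMatrix, transpose_apply, sub_mul, Finset.sum_sub_distrib,
      ite_mul, one_mul, zero_mul, Finset.sum_ite_eq', Finset.mem_univ, if_true]
    rw [T.sum_nonRoot_eq_sum
      (f := fun v => if v = T.parent c then (if T.Descendant v d then 1 else 0) else 0)
      (by simp [T.descendant_root_iff, d.2])]
    simp
  rw [hrow, T.descendant_iff c.2, one_apply]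
  by_cases h : d = c
  · subst h
    simp [T.not_descendant_parent d.2]
  · have hdc : d.1 ≠ c.1 := fun e => h (Subtype.ext e)
    by_cases h' : T.Descendant (T.parent c) d <;> simp [h', Ne.symm h, hdc]

lemma incidenceMatrix_mul_self_apply (c a : T.NonRoot) :
    T.incidenceMatrix c a * T.incidenceMatrix c a =
      (if c = a then 1 else 0) + (if T.parent c = a then 1 else 0) := by
  rcases eq_or_ne c a with rfl | h1
  · simp [incidenceMatrix, T.parent_ne c.2, (T.parent_ne c.2).symm]
  · by_cases h2 : T.parent c = a
    · simp [incidenceMatrix, h1, Ne.symm h1, h2]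
    · simp [incidenceMatrix, h1, Ne.symm h1, h2, Ne.symm h2]

lemma incidenceMatrix_mul_apply_of_ne {a b : T.NonRoot} (hab : a ≠ b) (c : T.NonRoot) :
    T.incidenceMatrix c a * T.incidenceMatrix c b =
      -(if c = a then (if b.1 = T.parent a then 1 else 0) else 0)
        - (if c = b then (if a.1 = T.parent b then 1 else 0) else 0) := by
  have hab' : a.1 ≠ b.1 := fun e => hab (Subtype.ext e)
  rcases eq_or_ne c a with rfl | hca
  · simp [incidenceMatrix, hab, Ne.symm hab, (T.parent_ne c.2).symm]
  rcases eq_or_ne c b with rfl | hcb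
  · simp [incidenceMatrix, hca, Ne.symm hca, (T.parent_ne c.2).symm]
  by_cases h : a.1 = T.parent c
  · have hb : b.1 ≠ T.parent c := h ▸ hab'.symm
    simp [incidenceMatrix, hca, hcb, Ne.symm hca, Ne.symm hcb, hb]
  · simp [incidenceMatrix, hca, hcb, Ne.symm hca, Ne.symm hcb, h]

lemma lap_eq_incidenceMatrix_mul (u : Sym2 V → ℝ) :
    T.lap u =
      T.incidenceMatrixᵀ * diagonal (fun c : T.NonRoot => u (T.parentEdge c)) *
        T.incidenceMatrix := by
  ext a b
  rw [transpose_mul_diagonal_mul_apply, lap]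
  by_cases hab : a = b
  · subst hab
    simp only [T.incidenceMatrix_mul_self_apply, mul_add, Finset.sum_add_distrib, mul_ite,
      mul_one, mul_zero, Finset.sum_ite_eq', Finset.mem_univ, if_true]
    rw [T.sum_adj_eq_parent_add_children a.2, parentEdge]
    congr 1
    refine Finset.sum_congr rfl fun c _ => ?_
    split_ifs with h
    · rw [parentEdge, h, Sym2.eq_swap]
    · rfl
  · simp only [if_neg hab, T.incidenceMatrix_mul_apply_of_ne hab, mul_sub, mul_neg, mul_ite,
      mul_one, mul_zero, Finset.sum_sub_distrib, Finset.sum_neg_distrib, Finset.sum_ite_eq',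
      Finset.mem_univ, if_true, T.adj_iff, ne_eq, a.2, b.2, not_false_eq_true, true_and]
    by_cases hba : T.parent a = b
    · have hab : T.parent b ≠ a := hba ▸ T.parent_parent_ne a.2
      simp [hba, Ne.symm hab, parentEdge]
    · by_cases hab : T.parent b = a
      · simp [hab, Ne.symm hba, parentEdge, Sym2.eq_swap]
      · simp [hba, hab, Ne.symm hba, Ne.symm hab]

lemma pathMatrix_mul_lap (w u : Sym2 V → ℝ) :
    T.pathMatrix w * T.lap u =
      T.ancestorMatrixᵀ *
        diagonal (fun c : T.NonRoot => w (T.parentEdge c) * u (T.parentEdge c)) *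
          T.incidenceMatrix := by
  have h : T.ancestorMatrix * T.incidenceMatrixᵀ = 1 := by
    rw [← transpose_transpose T.ancestorMatrix, ← transpose_mul,
      incidenceMatrix_mul_ancestorMatrix_transpose, transpose_one]
  rw [pathMatrix_eq_ancestorMatrix_mul, lap_eq_incidenceMatrix_mul, ← diagonal_mul_diagonal]
  simp only [Matrix.mul_assoc]
  rw [← Matrix.mul_assoc T.ancestorMatrix, h, Matrix.one_mul]

lemma pathMatrix_mul_lap_congr {w u w' u' : Sym2 V → ℝ}
    (h : ∀ e ∈ T.graph.edgeSet, w e * u e = w' e * u' e) :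
    T.pathMatrix w * T.lap u = T.pathMatrix w' * T.lap u' := by
  simp only [pathMatrix_mul_lap]
  congr 3
  exact funext fun c => h _ (T.parentEdge_mem_edgeSet c.2)

lemma pathMatrix_mul_lap_add_eq_one {w u w' u' : Sym2 V → ℝ}
    (h : ∀ e ∈ T.graph.edgeSet, w e * u e + w' e * u' e = 1) :
    T.pathMatrix w * T.lap u + T.pathMatrix w' * T.lap u' = 1 := by
  rw [pathMatrix_mul_lap, pathMatrix_mul_lap, ← Matrix.add_mul, ← Matrix.mul_add, diagonal_add]
  have hdiag : (fun c : T.NonRoot => w (T.parentEdge c) * u (T.parentEdge c) +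
      w' (T.parentEdge c) * u' (T.parentEdge c)) = fun _ => 1 :=
    funext fun c => h _ (T.parentEdge_mem_edgeSet c.2)
  rw [hdiag, diagonal_one, Matrix.mul_one]
  exact mul_eq_one_comm.mp T.incidenceMatrix_mul_ancestorMatrix_transpose

end GridTree

/-- Inversion of the Linear Coupled power-flow equations on a tree:
if `p = H_g ε + H_β θ` and `q = H_β ε - H_g θ`, where `H_g, H_β` are the reduced
weighted Laplacians with weights `g_e = r_e/(r_e² + x_e²)` and `β_e = x_e/(r_e² + x_e²)`,
then `ε = K_r p + K_x q` and `θ = K_x p - K_r q`. -/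
theorem lcpf_inversion
    {V : Type*} [Fintype V] [DecidableEq V] (T : GridTree V)
    (r x g β : Sym2 V → ℝ)
    (hrx : ∀ e ∈ T.graph.edgeSet, 0 < (r e) ^ 2 + (x e) ^ 2)
    (hg : ∀ e, g e = r e / ((r e) ^ 2 + (x e) ^ 2))
    (hβ : ∀ e, β e = x e / ((r e) ^ 2 + (x e) ^ 2))
    (p q ε θ : {v : V // v ≠ T.root} → ℝ)
    (hp : p = T.lap g *ᵥ ε + T.lap β *ᵥ θ)
    (hq : q = T.lap β *ᵥ ε - T.lap g *ᵥ θ) :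
    ε = T.pathMatrix r *ᵥ p + T.pathMatrix x *ᵥ q ∧
    θ = T.pathMatrix x *ᵥ p - T.pathMatrix r *ᵥ q := by
  have hinv : T.pathMatrix r * T.lap g + T.pathMatrix x * T.lap β = 1 :=
    T.pathMatrix_mul_lap_add_eq_one fun e he => by
      rw [hg, hβ]
      field_simp [(hrx e he).ne']
  have hswap : T.pathMatrix r * T.lap β = T.pathMatrix x * T.lap g :=
    T.pathMatrix_mul_lap_congr fun e _ => by rw [hg, hβ]; ring
  subst hp hq
  simp only [mulVec_add, mulVec_sub, mulVec_mulVec]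
  constructor
  · calc ε = (T.pathMatrix r * T.lap g + T.pathMatrix x * T.lap β) *ᵥ ε
          + (T.pathMatrix r * T.lap β - T.pathMatrix x * T.lap g) *ᵥ θ := by
          rw [hinv, hswap, sub_self, one_mulVec, zero_mulVec, add_zero]
      _ = _ := by simp only [add_mulVec, sub_mulVec]; abel
  · calc θ = (T.pathMatrix x * T.lap g - T.pathMatrix r * T.lap β) *ᵥ ε
          + (T.pathMatrix r * T.lap g + T.pathMatrix x * T.lap β) *ᵥ θ := by
          rw [hinv, hswap, sub_self, one_mulVec, zero_mulVec, zero_add]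
      _ = _ := by simp only [add_mulVec, sub_mulVec]; abel
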